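/- arXiv:2203.08634 — 2 statements merged into one kernel-verified Lean document; each statement's English description precedes it below -/
import Mathlib

section
/- For the function ψ(v) = v² − Δ²/(4π²v²) − JΔ/(2πv) with Δ > 0 restricted to v < 0, the derivative ψ'(v) = 2v + Δ²/(2π²v³) + JΔ/(2πv²) has at most two zeros on (−∞, 0); equivalently, the curve of equilibria K = −ψ(v) has either zero or two fold points. -/
/-!
Multiplying `ψ'(v) = 0` by `v³ / 2` clears the denominators and turns it into
`v⁴ + (JΔ / 4π) v + Δ² / 4π² = 0`. A quartic plus an affine function is strictly convex, and a
strictly convex function of one variable takes each value at most twice, since a third point of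
a level set would lie strictly between the other two.
-/

open Real

theorem StrictConvexOn.encard_setOf_eq_le_two {𝕜 β : Type*} [Field 𝕜] [LinearOrder 𝕜]
    [IsStrictOrderedRing 𝕜] [AddCommMonoid β] [LinearOrder β] [IsOrderedAddMonoid β]
    [Module 𝕜 β] [PosSMulStrictMono 𝕜 β] {s : Set 𝕜} {f : 𝕜 → β} (hf : StrictConvexOn 𝕜 s f)
    (c : β) : {x ∈ s | f x = c}.encard ≤ 2 := by
  set S := {x ∈ s | f x = c}
  have not_wbtw : ∀ ⦃x y z⦄, x ∈ S → y ∈ S → z ∈ S → x ≠ y → x ≠ z → y ≠ z → ¬ Wbtw 𝕜 x y z := by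
    rintro x y z ⟨hx, hfx⟩ ⟨-, hfy⟩ ⟨hz, hfz⟩ hxy hxz hyz hw
    have hy : y ∈ openSegment 𝕜 x z := mem_openSegment_of_ne_left_right hxy hyz.symm
      (by rwa [Wbtw, affineSegment_eq_segment] at hw)
    simpa [hfx, hfy, hfz] using hf.lt_on_openSegment hx hz hxz hy
  by_contra! h
  obtain ⟨t, hts, ht⟩ := Set.exists_subset_encard_eq (Order.add_one_le_of_lt h)
  obtain ⟨x, y, z, hxy, hxz, hyz, rfl⟩ := Set.encard_eq_three.mp ht
  have hx : x ∈ S := hts (by simp)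
  have hy : y ∈ S := hts (by simp)
  have hz : z ∈ S := hts (by simp)
  have hcol : Collinear 𝕜 ({x, y, z} : Set 𝕜) :=
    (Submodule.rank_le _).trans (Module.rank_self 𝕜).le
  rcases hcol.wbtw_or_wbtw_or_wbtw with hw | hw | hw
  · exact not_wbtw hx hy hz hxy hxz hyz hw
  · exact not_wbtw hy hz hx hyz hxy.symm hxz.symm hw
  · exact not_wbtw hz hx hy hxz.symm hyz.symm hxy hw

theorem strictConvexOn_pow_four_add_affine (b c : ℝ) :
    StrictConvexOn ℝ Set.univ (fun v : ℝ => v ^ 4 + b * v + c) :=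
  ((Even.strictConvexOn_pow ⟨2, rfl⟩ four_ne_zero).add_convexOn
    ((LinearMap.mul ℝ ℝ b).convexOn convex_univ)).add_const c

theorem stmt_1_general (Δ J : ℝ) :
    {v : ℝ | v < 0 ∧
      2 * v + Δ ^ 2 / (2 * π ^ 2 * v ^ 3) + J * Δ / (2 * π * v ^ 2) = 0}.encard ≤ 2 := by
  have hconv := strictConvexOn_pow_four_add_affine (J * Δ / (4 * π)) (Δ ^ 2 / (4 * π ^ 2))
  refine (Set.encard_mono ?_).trans (hconv.encard_setOf_eq_le_two 0)
  rintro v ⟨hv, hfold⟩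
  refine ⟨Set.mem_univ v, ?_⟩
  have hv0 : v ≠ 0 := hv.ne
  have hπ0 : π ≠ 0 := pi_pos.ne'
  calc v ^ 4 + J * Δ / (4 * π) * v + Δ ^ 2 / (4 * π ^ 2)
      = v ^ 3 / 2 * (2 * v + Δ ^ 2 / (2 * π ^ 2 * v ^ 3) + J * Δ / (2 * π * v ^ 2)) := by
        field_simp
        ring
    _ = 0 := by rw [hfold, mul_zero]

/-- `ψ'(v) = 2v + Δ²/(2π²v³) + JΔ/(2πv²)` has at most two zeros
on `(-∞, 0)`: the curve of equilibria has either zero or two fold points. -/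
theorem stmt_1 (Δ J : ℝ) (hΔ : 0 < Δ) :
    {v : ℝ | v < 0 ∧
      2 * v + Δ ^ 2 / (2 * π ^ 2 * v ^ 3) + J * Δ / (2 * π * v ^ 2) = 0}.encard ≤ 2 :=
  stmt_1_general Δ J
end

section
/- For the equilibrium curve K(r) = π²r² − Δ²/(4π²r²) − Jr of the instantaneous-synapse mean field (r > 0, Δ > 0), with derivative K'(r) = 2π²r + Δ²/(2π²r³) − J, one has K'(r) > 0 for all r > 0 if and only if J < min_{r>0}(2π²r + Δ²/(2π²r³)), and in that case the curve has no folds, while for J above that threshold the equation K'(r) = 0 has exactly two positive solutions, giving exactly two folds. -/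
open Real

/-- For `K(r) = π²r² - Δ²/(4π²r²) - Jr` on `r > 0`, the
derivative is `K'(r) = 2π²r + Δ²/(2π²r³) - J`; with
`h(r) = 2π²r + Δ²/(2π²r³)` attaining its minimum `m` on `(0,∞)`,
`K'(r) > 0` for all `r > 0` iff `J < m` (no folds), while for `J > m` the
equation `K'(r) = 0` has exactly two positive solutions (exactly two folds). -/
theorem stmt_18 (Δ J : ℝ) (hΔ : 0 < Δ) :
    let K : ℝ → ℝ := fun r => π ^ 2 * r ^ 2 - Δ ^ 2 / (4 * π ^ 2 * r ^ 2) - J * r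
    let h : ℝ → ℝ := fun r => 2 * π ^ 2 * r + Δ ^ 2 / (2 * π ^ 2 * r ^ 3)
    (∀ r : ℝ, 0 < r →
      HasDerivAt K (2 * π ^ 2 * r + Δ ^ 2 / (2 * π ^ 2 * r ^ 3) - J) r) ∧
    ∃ m : ℝ, IsLeast (h '' Set.Ioi 0) m ∧
      ((∀ r : ℝ, 0 < r → 0 < 2 * π ^ 2 * r + Δ ^ 2 / (2 * π ^ 2 * r ^ 3) - J) ↔ J < m) ∧
      (m < J →
        {r : ℝ | 0 < r ∧ 2 * π ^ 2 * r + Δ ^ 2 / (2 * π ^ 2 * r ^ 3) - J = 0}.encard = 2) := by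
  intro K h
  have hπ : (0:ℝ) < π := Real.pi_pos
  have hπ2 : (0:ℝ) < π ^ 2 := by positivity
  -- derivative of K
  have hK : ∀ r : ℝ, 0 < r →
      HasDerivAt K (2 * π ^ 2 * r + Δ ^ 2 / (2 * π ^ 2 * r ^ 3) - J) r := by
    intro r hr
    have hd : (4 * π ^ 2 * r ^ 2) ≠ 0 := by positivity
    have h1 : HasDerivAt (fun x : ℝ => π ^ 2 * x ^ 2) (π ^ 2 * (2 * r ^ 1)) r :=
      (hasDerivAt_pow 2 r).const_mul (π ^ 2)
    have hden : HasDerivAt (fun x : ℝ => 4 * π ^ 2 * x ^ 2) (4 * π ^ 2 * (2 * r ^ 1)) r :=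
      (hasDerivAt_pow 2 r).const_mul (4 * π ^ 2)
    have h2 : HasDerivAt (fun x : ℝ => Δ ^ 2 / (4 * π ^ 2 * x ^ 2))
        ((0 * (4 * π ^ 2 * r ^ 2) - Δ ^ 2 * (4 * π ^ 2 * (2 * r ^ 1))) / (4 * π ^ 2 * r ^ 2) ^ 2) r :=
      (hasDerivAt_const r (Δ ^ 2)).div hden hd
    have h3 : HasDerivAt (fun x : ℝ => J * x) (J * 1) r :=
      (hasDerivAt_id r).const_mul J
    have H := (h1.sub h2).sub h3
    refine H.congr_deriv ?_
    have hr' : r ≠ 0 := hr.ne'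
    have hπ' : π ≠ 0 := hπ.ne'
    field_simp
    ring
  -- derivative of h
  have hh : ∀ r : ℝ, 0 < r →
      HasDerivAt h (2 * π ^ 2 - 3 * Δ ^ 2 / (2 * π ^ 2 * r ^ 4)) r := by
    intro r hr
    have hd : (2 * π ^ 2 * r ^ 3) ≠ 0 := by positivity
    have h1 : HasDerivAt (fun x : ℝ => 2 * π ^ 2 * x) (2 * π ^ 2 * 1) r :=
      (hasDerivAt_id r).const_mul (2 * π ^ 2)
    have hden : HasDerivAt (fun x : ℝ => 2 * π ^ 2 * x ^ 3) (2 * π ^ 2 * (3 * r ^ 2)) r :=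
      (hasDerivAt_pow 3 r).const_mul (2 * π ^ 2)
    have h2 : HasDerivAt (fun x : ℝ => Δ ^ 2 / (2 * π ^ 2 * x ^ 3))
        ((0 * (2 * π ^ 2 * r ^ 3) - Δ ^ 2 * (2 * π ^ 2 * (3 * r ^ 2))) / (2 * π ^ 2 * r ^ 3) ^ 2) r :=
      (hasDerivAt_const r (Δ ^ 2)).div hden hd
    have H := h1.add h2
    refine H.congr_deriv ?_
    have hr' : r ≠ 0 := hr.ne'
    have hπ' : π ≠ 0 := hπ.ne'
    field_simp
    ring
  -- the minimizer
  set b : ℝ := 3 * Δ ^ 2 / (4 * π ^ 4) with hbdef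
  have hb : 0 < b := by positivity
  set r0 : ℝ := b ^ ((1:ℝ)/4) with hr0def
  have hr0 : 0 < r0 := Real.rpow_pos_of_pos hb _
  have hr04 : r0 ^ 4 = b := by
    rw [hr0def, ← Real.rpow_natCast (b ^ ((1:ℝ)/4)) 4, ← Real.rpow_mul hb.le]
    norm_num
  -- sign of h'
  have hsign : ∀ r : ℝ, 0 < r →
      2 * π ^ 2 - 3 * Δ ^ 2 / (2 * π ^ 2 * r ^ 4)
        = 4 * π ^ 4 * (r ^ 4 - r0 ^ 4) / (2 * π ^ 2 * r ^ 4) := by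
    intro r hr
    rw [hr04, hbdef]
    have hr' : r ≠ 0 := hr.ne'
    have hπ' : π ≠ 0 := hπ.ne'
    field_simp
    ring
  -- continuity of h on positive reals
  have hcont : ∀ s : Set ℝ, s ⊆ Set.Ioi (0:ℝ) → ContinuousOn h s := by
    intro s hs x hx
    exact (hh x (hs hx)).continuousAt.continuousWithinAt
  -- strict antitonicity on (0, r0]
  have hanti : StrictAntiOn h (Set.Ioc 0 r0) := by
    apply strictAntiOn_of_deriv_neg (convex_Ioc 0 r0)
      (hcont _ (fun x hx => hx.1))
    intro x hx
    rw [interior_Ioc] at hx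
    have hx0 : 0 < x := hx.1
    rw [(hh x hx0).deriv, hsign x hx0]
    apply div_neg_of_neg_of_pos
    · have : x ^ 4 < r0 ^ 4 := by
        apply pow_lt_pow_left₀ hx.2 hx0.le
        norm_num
      have h4 : (0:ℝ) < π ^ 4 := by positivity
      nlinarith
    · positivity
  -- strict monotonicity on [r0, ∞)
  have hmono : StrictMonoOn h (Set.Ici r0) := by
    apply strictMonoOn_of_deriv_pos (convex_Ici r0)
      (hcont _ (fun x hx => lt_of_lt_of_le hr0 hx))
    intro x hx
    rw [interior_Ici] at hx
    have hx0 : 0 < x := hr0.trans hx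
    rw [(hh x hx0).deriv, hsign x hx0]
    apply div_pos
    · have : r0 ^ 4 < x ^ 4 := by
        apply pow_lt_pow_left₀ hx hr0.le
        norm_num
      have h4 : (0:ℝ) < π ^ 4 := by positivity
      nlinarith
    · positivity
  set m : ℝ := h r0 with hmdef
  have hm0 : 0 < m := by
    rw [hmdef]
    show 0 < 2 * π ^ 2 * r0 + Δ ^ 2 / (2 * π ^ 2 * r0 ^ 3)
    positivity
  have hlb : ∀ r : ℝ, 0 < r → m ≤ h r := by
    intro r hr
    rcases lt_trichotomy r r0 with hlt | heq | hgt
    · exact (hanti ⟨hr, hlt.le⟩ ⟨hr0, le_refl r0⟩ hlt).le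
    · rw [heq]
    · exact (hmono (le_refl r0) hgt.le hgt).le
  refine ⟨hK, m, ⟨⟨r0, hr0, rfl⟩, ?_⟩, ?_, ?_⟩
  · rintro y ⟨r, hr, rfl⟩
    exact hlb r hr
  · constructor
    · intro H
      have := H r0 hr0
      have : 0 < h r0 - J := this
      linarith [hmdef ▸ this]
    · intro hJ r hr
      have := hlb r hr
      show 0 < h r - J
      linarith
  · intro hmJ
    have hJ0 : 0 < J := hm0.trans hmJ
    -- small solution
    set x0 : ℝ := (Δ ^ 2 / (4 * π ^ 2 * J)) ^ ((1:ℝ)/3) with hx0def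
    have hq : 0 < Δ ^ 2 / (4 * π ^ 2 * J) := by positivity
    have hx0pos : 0 < x0 := Real.rpow_pos_of_pos hq _
    have hx03 : x0 ^ 3 = Δ ^ 2 / (4 * π ^ 2 * J) := by
      rw [hx0def, ← Real.rpow_natCast ((Δ ^ 2 / (4 * π ^ 2 * J)) ^ ((1:ℝ)/3)) 3,
        ← Real.rpow_mul hq.le]
      norm_num
    set x : ℝ := min (r0 / 2) x0 with hxdef
    have hxpos : 0 < x := lt_min (by linarith) hx0pos
    have hxltr0 : x < r0 := lt_of_le_of_lt (min_le_left _ _) (by linarith)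
    have hx3 : x ^ 3 ≤ Δ ^ 2 / (4 * π ^ 2 * J) := by
      rw [← hx03]
      exact pow_le_pow_left₀ hxpos.le (min_le_right _ _) 3
    have hxbig : J < h x := by
      have h1 : 4 * π ^ 2 * J * x ^ 3 ≤ Δ ^ 2 := by
        have := mul_le_mul_of_nonneg_left hx3 (by positivity : (0:ℝ) ≤ 4 * π ^ 2 * J)
        rwa [mul_div_cancel₀ _ (by positivity : (4 * π ^ 2 * J) ≠ 0)] at this
      have h2 : 2 * J ≤ Δ ^ 2 / (2 * π ^ 2 * x ^ 3) := by
        rw [le_div_iff₀ (by positivity)]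
        nlinarith
      have h3 : 0 < 2 * π ^ 2 * x := by positivity
      show J < 2 * π ^ 2 * x + Δ ^ 2 / (2 * π ^ 2 * x ^ 3)
      nlinarith
    obtain ⟨r1, hr1mem, hr1⟩ : ∃ r1 ∈ Set.Icc x r0, h r1 = J := by
      have := intermediate_value_Icc' hxltr0.le
        (hcont _ (fun t ht => lt_of_lt_of_le hxpos ht.1))
      have hJmem : J ∈ Set.Icc (h r0) (h x) := ⟨by rw [← hmdef]; exact hmJ.le, hxbig.le⟩
      obtain ⟨r1, hmem, heq⟩ := this hJmem
      exact ⟨r1, hmem, heq⟩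
    have hr1pos : 0 < r1 := lt_of_lt_of_le hxpos hr1mem.1
    have hr1lt : r1 < r0 := by
      rcases lt_or_eq_of_le hr1mem.2 with hlt | heq
      · exact hlt
      · exfalso; rw [heq] at hr1; rw [← hmdef] at hr1; linarith
    -- large solution
    set y : ℝ := max (r0 + 1) (J / (2 * π ^ 2) + 1) with hydef
    have hy0 : r0 < y := lt_of_lt_of_le (by linarith) (le_max_left _ _)
    have hypos : 0 < y := hr0.trans hy0
    have hybig : J < h y := by
      have h1 : J / (2 * π ^ 2) + 1 ≤ y := le_max_right _ _
      have h2 : J < 2 * π ^ 2 * y := by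
        have := (div_le_iff₀ (by positivity : (0:ℝ) < 2 * π ^ 2)).mp (by linarith : J / (2 * π ^ 2) ≤ y - 1)
        nlinarith
      have h3 : 0 < Δ ^ 2 / (2 * π ^ 2 * y ^ 3) := by positivity
      show J < 2 * π ^ 2 * y + Δ ^ 2 / (2 * π ^ 2 * y ^ 3)
      linarith
    obtain ⟨r2, hr2mem, hr2⟩ : ∃ r2 ∈ Set.Icc r0 y, h r2 = J := by
      have := intermediate_value_Icc hy0.le
        (hcont _ (fun t ht => lt_of_lt_of_le hr0 ht.1))
      have hJmem : J ∈ Set.Icc (h r0) (h y) := ⟨by rw [← hmdef]; exact hmJ.le, hybig.le⟩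
      obtain ⟨r2, hmem, heq⟩ := this hJmem
      exact ⟨r2, hmem, heq⟩
    have hr2gt : r0 < r2 := by
      rcases lt_or_eq_of_le hr2mem.1 with hlt | heq
      · exact hlt
      · exfalso; rw [← heq] at hr2; rw [← hmdef] at hr2; linarith
    have hr2pos : 0 < r2 := hr0.trans hr2gt
    have hne : r1 ≠ r2 := by
      intro hcontr
      rw [hcontr] at hr1lt
      linarith
    have hseteq : {r : ℝ | 0 < r ∧ 2 * π ^ 2 * r + Δ ^ 2 / (2 * π ^ 2 * r ^ 3) - J = 0}
        = {r1, r2} := by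
      ext s
      simp only [Set.mem_setOf_eq, Set.mem_insert_iff, Set.mem_singleton_iff]
      constructor
      · rintro ⟨hs, heq⟩
        have hhs : h s = J := sub_eq_zero.mp heq
        rcases le_total s r0 with hle | hge
        · left
          exact hanti.injOn ⟨hs, hle⟩ ⟨hr1pos, hr1lt.le⟩ (by rw [hhs, hr1])
        · right
          exact hmono.injOn hge hr2gt.le (by rw [hhs, hr2])
      · rintro (rfl | rfl)
        · exact ⟨hr1pos, sub_eq_zero.mpr hr1⟩
        · exact ⟨hr2pos, sub_eq_zero.mpr hr2⟩
    rw [hseteq]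
    exact Set.encard_pair hne
end
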